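/- arXiv:math/0412125 — 5 statements merged into one kernel-verified Lean document; each statement's English description precedes it below -/
import Mathlib

section
/- Let f and g both be of Class III on an open set ω ⊆ ℍ with ω ∩ ℝ = ∅. Then f(p)g(p) = g(p)f(p) for all p ∈ ω, the product fg and the sum f + g are of Class III on ω, and if f(p) ≠ 0 for all p ∈ ω then the pointwise quaternionic inverse p ↦ f(p)⁻¹ is of Class III on ω. -/
open Quaternion

noncomputable section

/-- The quaternionic imaginary units. -/
def qI : ℍ[ℝ] := ⟨0, 1, 0, 0⟩
def qJ : ℍ[ℝ] := ⟨0, 0, 1, 0⟩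
def qK : ℍ[ℝ] := ⟨0, 0, 0, 1⟩

/-- `ι(p) = Im p / |Im p|`. -/
def iota (p : ℍ[ℝ]) : ℍ[ℝ] := (‖p.im‖)⁻¹ • p.im

/-- The left Fueter operator `∂f/∂_l p̄`. -/
def fueterL (f : ℍ[ℝ] → ℍ[ℝ]) (p : ℍ[ℝ]) : ℍ[ℝ] :=
  fderiv ℝ f p 1 + qI * fderiv ℝ f p qI + qJ * fderiv ℝ f p qJ + qK * fderiv ℝ f p qK

/-- The right Fueter operator `∂f/∂_r p̄`. -/
def fueterR (f : ℍ[ℝ] → ℍ[ℝ]) (p : ℍ[ℝ]) : ℍ[ℝ] :=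
  fderiv ℝ f p 1 + fderiv ℝ f p qI * qI + fderiv ℝ f p qJ * qJ + fderiv ℝ f p qK * qK

/-- Spherical parametrization of the imaginary unit sphere. -/
def sph (α β : ℝ) : ℍ[ℝ] :=
  ⟨0, Real.cos α * Real.sin β, Real.sin α * Real.sin β, Real.cos β⟩

/-- `∂ι/∂α`. -/
def sphA (α β : ℝ) : ℍ[ℝ] :=
  ⟨0, -(Real.sin α * Real.sin β), Real.cos α * Real.sin β, 0⟩

/-- `∂ι/∂β`. -/
def sphB (α β : ℝ) : ℍ[ℝ] :=
  ⟨0, Real.cos α * Real.cos β, Real.sin α * Real.cos β, -Real.sin β⟩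

/-- Complex Extrinsic on ω. -/
def IsCE (f : ℍ[ℝ] → ℍ[ℝ]) (ω : Set ℍ[ℝ]) : Prop := ∀ p ∈ ω, f p * p = p * f p

/-- Class I : C¹, CE and `∂f/∂t + ι ∂f/∂r = 0`. -/
def IsClassI (f : ℍ[ℝ] → ℍ[ℝ]) (ω : Set ℍ[ℝ]) : Prop :=
  ContDiffOn ℝ 1 f ω ∧ IsCE f ω ∧
  ∀ p ∈ ω, fderiv ℝ f p 1 + iota p * fderiv ℝ f p (iota p) = 0

/-- Class II with an explicit decomposition `f = u + ι v`. -/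
def IsClassIIWith (f : ℍ[ℝ] → ℍ[ℝ]) (u v : ℍ[ℝ] → ℝ) (ω : Set ℍ[ℝ]) : Prop :=
  ContDiffOn ℝ 1 f ω ∧
  (∀ p ∈ ω, f p = (u p : ℍ[ℝ]) + (v p : ℍ[ℝ]) * iota p) ∧
  ∀ p ∈ ω, fueterL f p = ((-2 * v p / ‖p.im‖ : ℝ) : ℍ[ℝ])

/-- (left-) Class II. -/
def IsClassII (f : ℍ[ℝ] → ℍ[ℝ]) (ω : Set ℍ[ℝ]) : Prop := ∃ u v, IsClassIIWith f u v ω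

/-- right-Class II with an explicit decomposition. -/
def IsClassIIRWith (f : ℍ[ℝ] → ℍ[ℝ]) (u v : ℍ[ℝ] → ℝ) (ω : Set ℍ[ℝ]) : Prop :=
  ContDiffOn ℝ 1 f ω ∧
  (∀ p ∈ ω, f p = (u p : ℍ[ℝ]) + (v p : ℍ[ℝ]) * iota p) ∧
  ∀ p ∈ ω, fueterR f p = ((-2 * v p / ‖p.im‖ : ℝ) : ℍ[ℝ])

/-- right-Class II. -/
def IsClassIIR (f : ℍ[ℝ] → ℍ[ℝ]) (ω : Set ℍ[ℝ]) : Prop := ∃ u v, IsClassIIRWith f u v ω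

/-- Complex Intrinsic : `u`, `v` depend only on `(t, r)`. -/
def IsCI (f : ℍ[ℝ] → ℍ[ℝ]) (ω : Set ℍ[ℝ]) : Prop :=
  ∃ ut vt : ℝ → ℝ → ℝ, ∀ p ∈ ω,
    f p = (ut p.re ‖p.im‖ : ℍ[ℝ]) + (vt p.re ‖p.im‖ : ℍ[ℝ]) * iota p

/-- Class III : Class I and CI. -/
def IsClassIII (f : ℍ[ℝ] → ℍ[ℝ]) (ω : Set ℍ[ℝ]) : Prop := IsClassI f ω ∧ IsCI f ω

/-! A CI value `u + v ι(p)` is the image of `u + v i` under the `ℝ`-algebra embedding `ℂ → ℍ`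
sending `i` to `ι(p)` (as `ι(p)² = -1`), so values of CI functions commute, and products and
inverses of CI functions are CI by computing in `ℂ`. A CE value `f(p)` commutes with `Im p`,
hence with `ι(p)`; by the Leibniz rules `D(fg) = f Dg + Df g` and `D(f⁻¹) = -f⁻¹ Df f⁻¹`, this
lets `ι(p)` pass through `f(p)` and gives, for `∂ = ∂/∂t + ι ∂/∂r`, the identities
`∂(fg) = f ∂g + (∂f) g` and `∂(f⁻¹) = -f⁻¹ (∂f) f⁻¹`, which vanish with `∂f` and `∂g`. -/

theorem iota_mul_self {p : ℍ[ℝ]} (hp : p.im ≠ 0) : iota p * iota p = -1 := by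
  have hr : ‖p.im‖ ≠ 0 := norm_ne_zero_iff.2 hp
  have him : p.im * p.im = -((‖p.im‖ * ‖p.im‖ : ℝ) : ℍ[ℝ]) := by
    rw [← pow_two, ← Quaternion.normSq_eq_norm_mul_self, Quaternion.sq_eq_neg_normSq]
    exact Quaternion.re_im (a := p)
  rw [iota, smul_mul_smul_comm, him, smul_neg, Quaternion.smul_coe,
    show ‖p.im‖⁻¹ * ‖p.im‖⁻¹ * (‖p.im‖ * ‖p.im‖) = 1 by field_simp, Quaternion.coe_one]

theorem Complex.liftAux_mk_eq_coe_add_coe_mul {x : ℍ[ℝ]} (hx : x * x = -1) (a b : ℝ) :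
    Complex.liftAux x hx ⟨a, b⟩ = (a : ℍ[ℝ]) + (b : ℍ[ℝ]) * x := by
  simp [Complex.liftAux_apply, Quaternion.coe_mul_eq_smul, Quaternion.algebraMap_def]

theorem contDiffAt_inv_of_ne_zero {𝕜 R : Type*} [NontriviallyNormedField 𝕜] [NormedDivisionRing R]
    [NormedAlgebra 𝕜 R] [HasSummableGeomSeries R] {x : R} (hx : x ≠ 0) {n : WithTop ℕ∞} :
    ContDiffAt 𝕜 n Inv.inv x := by
  simpa only [Ring.inverse_eq_inv', Units.val_mk0] using contDiffAt_ringInverse 𝕜 (Units.mk0 x hx)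

namespace IsCE

variable {ω : Set ℍ[ℝ]} {f g : ℍ[ℝ] → ℍ[ℝ]}

theorem commute (hf : IsCE f ω) {p : ℍ[ℝ]} (hp : p ∈ ω) : Commute (f p) p := hf p hp

theorem commute_iota (hf : IsCE f ω) {p : ℍ[ℝ]} (hp : p ∈ ω) : Commute (iota p) (f p) := by
  have him : Commute (f p) p.im := by
    rw [eq_sub_of_add_eq' (Quaternion.re_add_im p)]
    exact (hf.commute hp).sub_right (Quaternion.coe_commute _ _).symm
  exact him.symm.smul_left _

theorem add (hf : IsCE f ω) (hg : IsCE g ω) : IsCE (fun p => f p + g p) ω :=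
  fun _ hp => (hf.commute hp).add_left (hg.commute hp)

theorem mul (hf : IsCE f ω) (hg : IsCE g ω) : IsCE (fun p => f p * g p) ω :=
  fun _ hp => (hf.commute hp).mul_left (hg.commute hp)

theorem inv (hf : IsCE f ω) : IsCE (fun p => (f p)⁻¹) ω :=
  fun _ hp => (hf.commute hp).inv_left₀

end IsCE

namespace IsClassI

variable {ω : Set ℍ[ℝ]} {f g : ℍ[ℝ] → ℍ[ℝ]}

open ContinuousLinearMap

theorem differentiableAt (hf : IsClassI f ω) (hω : IsOpen ω) {p : ℍ[ℝ]} (hp : p ∈ ω) :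
    DifferentiableAt ℝ f p :=
  (hf.1.differentiableOn one_ne_zero).differentiableAt (hω.mem_nhds hp)

theorem add (hω : IsOpen ω) (hf : IsClassI f ω) (hg : IsClassI g ω) :
    IsClassI (fun p => f p + g p) ω := by
  refine ⟨hf.1.add hg.1, hf.2.1.add hg.2.1, fun p hp => ?_⟩
  rw [fderiv_fun_add (hf.differentiableAt hω hp) (hg.differentiableAt hω hp)]
  simp only [add_apply]
  linear_combination (norm := noncomm_ring) hf.2.2 p hp + hg.2.2 p hp

theorem mul (hω : IsOpen ω) (hf : IsClassI f ω) (hg : IsClassI g ω) :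
    IsClassI (fun p => f p * g p) ω := by
  refine ⟨hf.1.mul hg.1, hf.2.1.mul hg.2.1, fun p hp => ?_⟩
  set A := fderiv ℝ f p
  set B := fderiv ℝ g p
  have hι : Commute (iota p) (f p) := hf.2.1.commute_iota hp
  rw [fderiv_fun_mul' (hf.differentiableAt hω hp) (hg.differentiableAt hω hp)]
  simp only [add_apply, smul_apply, op_smul_eq_mul, smul_eq_mul]
  calc f p * B 1 + A 1 * g p + iota p * (f p * B (iota p) + A (iota p) * g p)
      = f p * (B 1 + iota p * B (iota p)) + (A 1 + iota p * A (iota p)) * g p := by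
        rw [mul_add, ← mul_assoc, hι.eq]
        noncomm_ring
    _ = 0 := by rw [hf.2.2 p hp, hg.2.2 p hp, mul_zero, zero_mul, add_zero]

theorem inv (hω : IsOpen ω) (hf : IsClassI f ω) (hne : ∀ p ∈ ω, f p ≠ 0) :
    IsClassI (fun p => (f p)⁻¹) ω := by
  refine ⟨fun p hp => (contDiffAt_inv_of_ne_zero (hne p hp)).comp_contDiffWithinAt p (hf.1 p hp),
    hf.2.1.inv, fun p hp => ?_⟩
  set A := fderiv ℝ f p
  set c := (f p)⁻¹
  have hι : Commute (iota p) c := (hf.2.1.commute_iota hp).inv_right₀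
  have hderiv : fderiv ℝ (fun q => (f q)⁻¹) p = (-mulLeftRight ℝ ℍ[ℝ] c c).comp A :=
    ((hasFDerivAt_inv' (hne p hp)).comp p (hf.differentiableAt hω hp).hasFDerivAt).fderiv
  rw [hderiv]
  simp only [comp_apply, neg_apply, mulLeftRight_apply]
  calc -(c * A 1 * c) + iota p * -(c * A (iota p) * c)
      = -(c * (A 1 + iota p * A (iota p)) * c) := by
        rw [mul_neg, ← mul_assoc, ← mul_assoc, hι.eq]
        noncomm_ring
    _ = 0 := by rw [hf.2.2 p hp, mul_zero, zero_mul, neg_zero]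

end IsClassI

namespace IsCI

variable {ω : Set ℍ[ℝ]} {f g : ℍ[ℝ] → ℍ[ℝ]}

theorem commute (hf : IsCI f ω) (hg : IsCI g ω) {p : ℍ[ℝ]} (hp : p ∈ ω) :
    Commute (f p) (g p) := by
  obtain ⟨u, v, hf⟩ := hf
  obtain ⟨u', v', hg⟩ := hg
  have hι : ∀ a b : ℝ, Commute (iota p) ((a : ℍ[ℝ]) + (b : ℍ[ℝ]) * iota p) := fun a b =>
    (Quaternion.coe_commute a _).symm.add_right
      ((Quaternion.coe_commute b _).symm.mul_right (Commute.refl _))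
  rw [hf p hp, hg p hp]
  exact (Quaternion.coe_commute _ _).add_left ((Quaternion.coe_commute _ _).mul_left (hι _ _))

theorem add (hf : IsCI f ω) (hg : IsCI g ω) : IsCI (fun p => f p + g p) ω := by
  obtain ⟨u, v, hf⟩ := hf
  obtain ⟨u', v', hg⟩ := hg
  refine ⟨fun t r => u t r + u' t r, fun t r => v t r + v' t r, fun p hp => ?_⟩
  dsimp only
  rw [hf p hp, hg p hp]
  push_cast
  noncomm_ring

theorem mul (hIm : ∀ p ∈ ω, p.im ≠ 0) (hf : IsCI f ω) (hg : IsCI g ω) :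
    IsCI (fun p => f p * g p) ω := by
  obtain ⟨u, v, hf⟩ := hf
  obtain ⟨u', v', hg⟩ := hg
  let F : ℝ → ℝ → ℂ := fun t r => ⟨u t r, v t r⟩ * ⟨u' t r, v' t r⟩
  refine ⟨fun t r => (F t r).re, fun t r => (F t r).im, fun p hp => ?_⟩
  have hι := iota_mul_self (hIm p hp)
  dsimp only
  rw [hf p hp, hg p hp, ← Complex.liftAux_mk_eq_coe_add_coe_mul hι,
    ← Complex.liftAux_mk_eq_coe_add_coe_mul hι, ← map_mul]
  exact Complex.liftAux_mk_eq_coe_add_coe_mul hι _ _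

theorem inv (hIm : ∀ p ∈ ω, p.im ≠ 0) (hf : IsCI f ω) : IsCI (fun p => (f p)⁻¹) ω := by
  obtain ⟨u, v, hf⟩ := hf
  let F : ℝ → ℝ → ℂ := fun t r => (⟨u t r, v t r⟩ : ℂ)⁻¹
  refine ⟨fun t r => (F t r).re, fun t r => (F t r).im, fun p hp => ?_⟩
  have hι := iota_mul_self (hIm p hp)
  dsimp only
  rw [hf p hp, ← Complex.liftAux_mk_eq_coe_add_coe_mul hι, ← map_inv₀]
  exact Complex.liftAux_mk_eq_coe_add_coe_mul hι _ _

end IsCI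

/-- Class III functions commute and are closed under product, sum
and pointwise inverse. -/
theorem stmt5 (ω : Set ℍ[ℝ]) (hω : IsOpen ω) (hIm : ∀ p ∈ ω, p.im ≠ 0)
    (f g : ℍ[ℝ] → ℍ[ℝ]) (hf : IsClassIII f ω) (hg : IsClassIII g ω) :
    (∀ p ∈ ω, f p * g p = g p * f p) ∧
    IsClassIII (fun p => f p * g p) ω ∧
    IsClassIII (fun p => f p + g p) ω ∧
    ((∀ p ∈ ω, f p ≠ 0) → IsClassIII (fun p => (f p)⁻¹) ω) :=
  ⟨fun _ hp => (hf.2.commute hg.2 hp).eq,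
    ⟨hf.1.mul hω hg.1, hf.2.mul hIm hg.2⟩,
    ⟨hf.1.add hω hg.1, hf.2.add hg.2⟩,
    fun hne => ⟨hf.1.inv hω hne, hf.2.inv hIm⟩⟩

end
end

section
/- Every function of Class III on an open set ω ⊆ ℍ with ω ∩ ℝ = ∅ is of Class II on ω. -/
open Quaternion

noncomputable section

/-!
Fix `p ∈ ω` and write `a = ι(p)`, `r = |Im p|`, `L = df(p)`. Along the great circle through `p`
in the sphere `{Re = Re p, |Im| = r}` the functions `u`, `v` are constant, so there `f` varies
only through `ι`; hence `L w = (v/r) w` for every imaginary `w ⊥ a`. Splitting `i, j, k` into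
their parts along `a` and orthogonal to `a` turns the Fueter operator into
`L 1 + a L a + (v/r)(i² + j² + k² - a²)`, and the Class I equation `L 1 + a L a = 0` leaves
`(v/r)(-3 + 1) = -2v/r`.
-/

open Real InnerProductSpace Topology

theorem norm_cos_smul_add_sin_smul {F : Type*} [NormedAddCommGroup F] [InnerProductSpace ℝ F]
    {x y : F} (hxy : ⟪x, y⟫_ℝ = 0) (hyx : ‖y‖ = ‖x‖) (s : ℝ) :
    ‖cos s • x + sin s • y‖ = ‖x‖ := by
  have hsq : ‖cos s • x + sin s • y‖ ^ 2 = ‖x‖ ^ 2 := by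
    rw [norm_add_sq_real, real_inner_smul_left, real_inner_smul_right, hxy, norm_smul, norm_smul,
      hyx, Real.norm_eq_abs, Real.norm_eq_abs]
    linear_combination ‖x‖ ^ 2 * cos_sq_add_sin_sq s + ‖x‖ ^ 2 * (sq_abs (cos s) + sq_abs (sin s))
  exact (sq_eq_sq₀ (norm_nonneg _) (norm_nonneg _)).1 hsq

theorem fderiv_apply_eq_smul_of_comp_eventuallyEq {E : Type*} [NormedAddCommGroup E]
    [NormedSpace ℝ E] {f : E → E} {γ : ℝ → E} {w c : E} {k : ℝ}
    (hf : DifferentiableAt ℝ f (γ 0)) (hγ : HasDerivAt γ w 0)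
    (hfγ : f ∘ γ =ᶠ[𝓝 0] fun s => c + k • γ s) :
    fderiv ℝ f (γ 0) w = k • w :=
  (hf.hasFDerivAt.comp_hasDerivAt 0 hγ).unique
    (((hγ.const_smul k).const_add c).congr_of_eventuallyEq hfγ)

theorem Quaternion.im_eq_self_of_re_eq_zero {w : ℍ[ℝ]} (hw : w.re = 0) : w.im = w := by
  rw [← sub_re_self, hw, coe_zero, sub_zero]

theorem iota_re (p : ℍ[ℝ]) : (iota p).re = 0 := by simp [iota]

theorem norm_iota {p : ℍ[ℝ]} (hp : p.im ≠ 0) : ‖iota p‖ = 1 := by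
  rw [iota, norm_smul, norm_inv, norm_norm, inv_mul_cancel₀ (norm_ne_zero_iff.2 hp)]

theorem fderiv_apply_eq_smul_of_inner_iota_eq_zero {f : ℍ[ℝ] → ℍ[ℝ]} {ω : Set ℍ[ℝ]}
    (hω : IsOpen ω) {ut vt : ℝ → ℝ → ℝ}
    (hCI : ∀ q ∈ ω, f q = (ut q.re ‖q.im‖ : ℍ[ℝ]) + (vt q.re ‖q.im‖ : ℍ[ℝ]) * iota q)
    {p : ℍ[ℝ]} (hp : p ∈ ω) (him : p.im ≠ 0) (hf : DifferentiableAt ℝ f p)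
    {w : ℍ[ℝ]} (hw : w.re = 0) (hwp : ⟪w, iota p⟫_ℝ = 0) :
    fderiv ℝ f p w = (vt p.re ‖p.im‖ / ‖p.im‖) • w := by
  rcases eq_or_ne w 0 with rfl | hw0
  · simp
  set r := ‖p.im‖
  have hr : 0 < r := norm_pos_iff.2 him
  set k := r / ‖w‖
  have hk : k ≠ 0 := div_ne_zero hr.ne' (norm_ne_zero_iff.2 hw0)
  set γ : ℝ → ℍ[ℝ] := fun s => p.re + (cos s • p.im + sin s • (k • w))
  have hγ0 : γ 0 = p := by simp [γ]
  have hγre s : (γ s).re = p.re := by simp [γ, hw]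
  have hγim s : (γ s).im = cos s • p.im + sin s • (k • w) := by
    simp [γ, im_smul, Quaternion.im_eq_self_of_re_eq_zero hw]
  have hγnorm s : ‖(γ s).im‖ = r := by
    rw [hγim]
    refine norm_cos_smul_add_sin_smul ?_ ?_ s
    · rw [iota, real_inner_smul_right, mul_eq_zero] at hwp
      rw [real_inner_smul_right, real_inner_comm, hwp.resolve_left (inv_ne_zero hr.ne'), mul_zero]
    · rw [norm_smul, Real.norm_of_nonneg (by positivity),
        div_mul_cancel₀ _ (norm_ne_zero_iff.2 hw0)]
  have hγ : HasDerivAt γ (k • w) 0 := by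
    simpa [γ] using (((hasDerivAt_cos 0).smul_const p.im).add
      ((hasDerivAt_sin 0).smul_const (k • w))).const_add (p.re : ℍ[ℝ])
  have hγω : ∀ᶠ s in 𝓝 0, γ s ∈ ω :=
    (show Continuous γ by fun_prop).continuousAt.eventually_mem (hγ0 ▸ hω.mem_nhds hp)
  have hfγ : f ∘ γ =ᶠ[𝓝 0] fun s =>
      ((ut p.re r : ℍ[ℝ]) - (vt p.re r / r) • (p.re : ℍ[ℝ])) + (vt p.re r / r) • γ s := by
    filter_upwards [hγω] with s hs
    rw [Function.comp_apply, hCI _ hs, hγre, hγnorm, iota, hγnorm, hγim, coe_mul_eq_smul]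
    simp only [γ]
    module
  have key := fderiv_apply_eq_smul_of_comp_eventuallyEq (hγ0 ▸ hf) hγ hfγ
  rw [hγ0, map_smul, smul_comm] at key
  exact smul_right_injective _ hk key

theorem fueter_sum_eq_of_eq_smul_on_orthogonal {F : Type*} [FunLike F ℍ[ℝ] ℍ[ℝ]]
    [LinearMapClass F ℝ ℍ[ℝ] ℍ[ℝ]] (L : F) {a : ℍ[ℝ]} (ha : a.re = 0) (ha1 : ‖a‖ = 1) {c : ℝ}
    (hL : ∀ w : ℍ[ℝ], w.re = 0 → ⟪w, a⟫_ℝ = 0 → L w = c • w) :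
    L 1 + qI * L qI + qJ * L qJ + qK * L qK = L 1 + a * L a + ((-2 * c : ℝ) : ℍ[ℝ]) := by
  have hdecomp (e : ℍ[ℝ]) (he : e.re = 0) : L e = ⟪e, a⟫_ℝ • L a + c • (e - ⟪e, a⟫_ℝ • a) := by
    have horth : ⟪e - ⟪e, a⟫_ℝ • a, a⟫_ℝ = 0 := by
      rw [inner_sub_left, real_inner_smul_left, real_inner_self_eq_norm_sq, ha1]
      ring
    rw [← hL _ (by simp [he, ha]) horth, ← map_smul, ← map_add, add_sub_cancel]
  have hinner (e : ℍ[ℝ]) : ⟪e, a⟫_ℝ = e.imI * a.imI + e.imJ * a.imJ + e.imK * a.imK := by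
    simp only [inner_def, re_mul, re_star, imI_star, imJ_star, imK_star, ha]
    ring
  have hI : ⟪qI, a⟫_ℝ = a.imI := by rw [hinner]; simp [qI]
  have hJ : ⟪qJ, a⟫_ℝ = a.imJ := by rw [hinner]; simp [qJ]
  have hK : ⟪qK, a⟫_ℝ = a.imK := by rw [hinner]; simp [qK]
  have hsum : a.imI • qI + a.imJ • qJ + a.imK • qK = a := by
    ext <;> simp only [re_add, imI_add, imJ_add, imK_add, re_smul, imI_smul, imJ_smul, imK_smul,
      smul_eq_mul, ha] <;> simp [qI, qJ, qK]
  have hsq : qI * qI + qJ * qJ + qK * qK = ((-3 : ℝ) : ℍ[ℝ]) := by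
    ext <;> simp only [re_add, imI_add, imJ_add, imK_add, re_mul, imI_mul, imJ_mul, imK_mul, re_coe,
      imI_coe, imJ_coe, imK_coe] <;> norm_num [qI, qJ, qK]
  have haa : a * a = -1 := by
    have := Quaternion.sq_eq_neg_normSq.2 ha
    rwa [sq, normSq_eq_norm_mul_self, ha1, mul_one, coe_one] at this
  rw [hdecomp qI rfl, hdecomp qJ rfl, hdecomp qK rfl, hI, hJ, hK]
  calc L 1 + qI * (a.imI • L a + c • (qI - a.imI • a)) + qJ * (a.imJ • L a + c • (qJ - a.imJ • a))
        + qK * (a.imK • L a + c • (qK - a.imK • a))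
      = L 1 + ((a.imI • qI + a.imJ • qJ + a.imK • qK) * L a
        + c • ((qI * qI + qJ * qJ + qK * qK) - (a.imI • qI + a.imJ • qJ + a.imK • qK) * a)) := by
        simp only [mul_add, mul_sub, mul_smul_comm, smul_mul_assoc, add_mul, smul_add, smul_sub]
        module
    _ = L 1 + a * L a + ((-2 * c : ℝ) : ℍ[ℝ]) := by
        rw [hsum, hsq, haa, sub_neg_eq_add, ← coe_one, ← coe_add, smul_coe, add_assoc]
        norm_num [mul_comm]

/-- Class III ⊆ Class II. -/
theorem stmt7 (ω : Set ℍ[ℝ]) (hω : IsOpen ω) (hIm : ∀ p ∈ ω, p.im ≠ 0)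
    (f : ℍ[ℝ] → ℍ[ℝ]) (hf : IsClassIII f ω) :
    IsClassII f ω := by
  obtain ⟨⟨hC1, -, hI⟩, ut, vt, hCI⟩ := hf
  refine ⟨fun q => ut q.re ‖q.im‖, fun q => vt q.re ‖q.im‖, hC1, hCI, fun p hp => ?_⟩
  have him := hIm p hp
  have hdiff : DifferentiableAt ℝ f p :=
    (hC1.differentiableOn one_ne_zero).differentiableAt (hω.mem_nhds hp)
  have hfueter := fueter_sum_eq_of_eq_smul_on_orthogonal (fderiv ℝ f p) (iota_re p) (norm_iota him)
    fun w hw hwι => fderiv_apply_eq_smul_of_inner_iota_eq_zero hω hCI hp him hdiff hw hwι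
  rw [fueterL, hfueter, hI p hp, zero_add, mul_div_assoc]

end
end

section
/- Let f = u + ιv be a function of Class II on an open set ω ⊆ ℍ with ω ∩ ℝ = ∅, and define U(t,r,α,β) = u(t + r·ι(α,β)) and V(t,r,α,β) = v(t + r·ι(α,β)). Then at every (t,r,α,β) with t + r·ι(α,β) ∈ ω, r > 0 and sin β ≠ 0, the following spherical Cauchy–Riemann equations hold: (1/sin β)·∂V/∂α + ∂U/∂β = 0 and (1/sin β)·∂U/∂α − ∂V/∂β = 0. -/
open Quaternion

noncomputable section

/-!
At `p = t + r ι` with `ι = ι(α, β)`, the quaternions `1, ι, ∂_β ι, ∂_α ι / sin β` form an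
orthonormal frame of `ℍ`, and the left Fueter operator `Σ e · df(e)` (sum over the orthonormal
frame `1, i, j, k`) takes the same value on every orthonormal frame, being the contraction of the
bilinear map `(x, y) ↦ x · df(y)`. Differentiating `f = u + ι v` along the four coordinate curves
shows that `df(1)` and `df(ι)` lie in `span {1, ι}`, while
`r df(∂_α ι) = U_α + V_α ι + v ∂_α ι` and `r df(∂_β ι) = U_β + V_β ι + v ∂_β ι`.
In the frame, the Class II equation multiplied by `r sin β` then says that a real quaternion equals
`(sin β U_β + V_α) ∂_β ι + (U_α - sin β V_β) ∂_α ι / sin β` modulo `span {1, ι}`, so both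
coefficients vanish.
-/

open Filter Topology
open scoped InnerProductSpace

theorem LinearMap.sum_bilin_self_eq {ι κ E F : Type*} [Fintype ι] [Fintype κ]
    [NormedAddCommGroup E] [InnerProductSpace ℝ E] [AddCommGroup F] [Module ℝ F]
    (B : E →ₗ[ℝ] E →ₗ[ℝ] F) (b : OrthonormalBasis ι ℝ E) (c : OrthonormalBasis κ ℝ E) :
    ∑ j, B (c j) (c j) = ∑ i, B (b i) (b i) := by
  classical
  have expand (j : κ) :
      B (c j) (c j) = ∑ i, ∑ k, (⟪b i, c j⟫_ℝ * ⟪c j, b k⟫_ℝ) • B (b i) (b k) := by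
    conv_lhs => rw [← b.sum_repr' (c j)]
    simp_rw [map_sum, LinearMap.sum_apply, map_smul, LinearMap.smul_apply, smul_smul,
      real_inner_comm (c j)]
    rw [Finset.sum_comm]
    simp_rw [mul_comm]
  calc ∑ j, B (c j) (c j)
      = ∑ i, ∑ k, (∑ j, ⟪b i, c j⟫_ℝ * ⟪c j, b k⟫_ℝ) • B (b i) (b k) := by
        simp_rw [expand, Finset.sum_smul]
        rw [Finset.sum_comm]
        exact Finset.sum_congr rfl fun i _ => Finset.sum_comm
    _ = ∑ i, B (b i) (b i) := by
        simp_rw [c.sum_inner_mul_inner, orthonormal_iff_ite.mp b.orthonormal, ite_smul, one_smul,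
          zero_smul, Finset.sum_ite_eq, Finset.mem_univ, if_true]

def OrthonormalBasis.ofOrthonormalOfCardEqFinrank {ι 𝕜 E : Type*} [Fintype ι] [Nonempty ι]
    [RCLike 𝕜] [NormedAddCommGroup E] [InnerProductSpace 𝕜 E] {v : ι → E}
    (hv : Orthonormal 𝕜 v) (card_eq : Fintype.card ι = Module.finrank 𝕜 E) :
    OrthonormalBasis ι 𝕜 E :=
  OrthonormalBasis.mk hv <| by
    rw [← (basisOfOrthonormalOfCardEqFinrank hv card_eq).span_eq,
      coe_basisOfOrthonormalOfCardEqFinrank]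

theorem HasDerivAt.exists_hasDerivAt_coeffs {E : Type*} [NormedAddCommGroup E]
    [InnerProductSpace ℝ E] {a b : ℝ → ℝ} {g e : ℝ → E} {c g' e' : E} {s : ℝ}
    (hg : HasDerivAt g g' s) (he : HasDerivAt e e' s) (hc : ‖c‖ = 1) (he_norm : ∀ x, ‖e x‖ = 1)
    (hce : ∀ x, ⟪c, e x⟫_ℝ = 0) (hgab : ∀ᶠ x in 𝓝 s, g x = a x • c + b x • e x) :
    ∃ a' b', HasDerivAt a a' s ∧ HasDerivAt b b' s ∧ g' = a' • c + b' • e s + b s • e' := by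
  have ha : (fun x => ⟪c, g x⟫_ℝ) =ᶠ[𝓝 s] a := hgab.mono fun x hx => by
    simp [hx, inner_add_right, inner_smul_right, hc, hce]
  have hb : (fun x => ⟪e x, g x⟫_ℝ) =ᶠ[𝓝 s] b := hgab.mono fun x hx => by
    simp [hx, inner_add_right, inner_smul_right, he_norm, real_inner_comm c, hce]
  have ha' := ((hasDerivAt_const s c).inner ℝ hg).congr_of_eventuallyEq ha.symm
  have hb' := (he.inner ℝ hg).congr_of_eventuallyEq hb.symm
  refine ⟨_, _, ha', hb', hg.unique ?_⟩
  exact ((ha'.smul_const c).add (hb'.smul he)).congr_of_eventuallyEq hgab |>.congr_deriv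
    (by module)

lemma orthonormal_one_qI_qJ_qK : Orthonormal ℝ ![1, qI, qJ, qK] := by
  rw [orthonormal_iff_ite]
  intro i j
  fin_cases i <;> fin_cases j <;> simp only [Quaternion.inner_def] <;>
    simp [Quaternion.re_mul] <;> simp [qI, qJ, qK]

lemma fueterL_eq_of_orthonormal (f : ℍ[ℝ] → ℍ[ℝ]) (p x y z : ℍ[ℝ])
    (hxyz : Orthonormal ℝ ![1, x, y, z]) :
    fueterL f p = fderiv ℝ f p 1 + x * fderiv ℝ f p x + y * fderiv ℝ f p y
      + z * fderiv ℝ f p z := by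
  have card_eq : Fintype.card (Fin 4) = Module.finrank ℝ ℍ[ℝ] := by
    simp [Quaternion.finrank_eq_four]
  have := ((LinearMap.mul ℝ ℍ[ℝ]).compl₂ (fderiv ℝ f p : ℍ[ℝ] →ₗ[ℝ] ℍ[ℝ])).sum_bilin_self_eq
    (.ofOrthonormalOfCardEqFinrank hxyz card_eq)
    (.ofOrthonormalOfCardEqFinrank orthonormal_one_qI_qJ_qK card_eq)
  simpa [OrthonormalBasis.ofOrthonormalOfCardEqFinrank, Fin.sum_univ_four, fueterL] using this

def sphAUnit (α : ℝ) : ℍ[ℝ] := ⟨0, -Real.sin α, Real.cos α, 0⟩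

section SphericalFrame

variable (α β : ℝ)

@[simp] lemma sph_re : (sph α β).re = 0 := rfl
@[simp] lemma sph_imI : (sph α β).imI = Real.cos α * Real.sin β := rfl
@[simp] lemma sph_imJ : (sph α β).imJ = Real.sin α * Real.sin β := rfl
@[simp] lemma sph_imK : (sph α β).imK = Real.cos β := rfl
@[simp] lemma sphB_re : (sphB α β).re = 0 := rfl
@[simp] lemma sphB_imI : (sphB α β).imI = Real.cos α * Real.cos β := rfl
@[simp] lemma sphB_imJ : (sphB α β).imJ = Real.sin α * Real.cos β := rfl
@[simp] lemma sphB_imK : (sphB α β).imK = -Real.sin β := rfl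
@[simp] lemma sphAUnit_re : (sphAUnit α).re = 0 := rfl
@[simp] lemma sphAUnit_imI : (sphAUnit α).imI = -Real.sin α := rfl
@[simp] lemma sphAUnit_imJ : (sphAUnit α).imJ = Real.cos α := rfl
@[simp] lemma sphAUnit_imK : (sphAUnit α).imK = 0 := rfl

lemma sphA_eq_sin_smul : sphA α β = Real.sin β • sphAUnit α := by
  ext <;> simp [sphA] <;> ring

lemma orthonormal_one_sph_sphB_sphAUnit :
    Orthonormal ℝ ![1, sph α β, sphB α β, sphAUnit α] := by
  rw [orthonormal_iff_ite]
  intro i j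
  fin_cases i <;> fin_cases j <;> simp only [Quaternion.inner_def] <;> simp [Quaternion.re_mul] <;>
    grind [Real.sin_sq_add_cos_sq]

lemma norm_sph : ‖sph α β‖ = 1 := by
  simpa using (orthonormal_one_sph_sphB_sphAUnit α β).1 1

lemma inner_one_sph : ⟪1, sph α β⟫_ℝ = 0 := by
  simpa using (orthonormal_one_sph_sphB_sphAUnit α β).2 (show (0 : Fin 4) ≠ 1 by decide)

lemma sph_mul_self : sph α β * sph α β = -1 := by
  ext <;> simp [Quaternion.re_mul, Quaternion.imI_mul, Quaternion.imJ_mul, Quaternion.imK_mul] <;>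
    grind [Real.sin_sq_add_cos_sq]

lemma sphB_mul_self : sphB α β * sphB α β = -1 := by
  ext <;> simp [Quaternion.re_mul, Quaternion.imI_mul, Quaternion.imJ_mul, Quaternion.imK_mul] <;>
    grind [Real.sin_sq_add_cos_sq]

lemma sphAUnit_mul_self : sphAUnit α * sphAUnit α = -1 := by
  ext <;> simp [Quaternion.re_mul, Quaternion.imI_mul, Quaternion.imJ_mul, Quaternion.imK_mul] <;>
    grind [Real.sin_sq_add_cos_sq]

lemma sphB_mul_sph : sphB α β * sph α β = -sphAUnit α := by
  ext <;> simp [Quaternion.re_mul, Quaternion.imI_mul, Quaternion.imJ_mul, Quaternion.imK_mul] <;>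
    grind [Real.sin_sq_add_cos_sq]

lemma sphAUnit_mul_sph : sphAUnit α * sph α β = sphB α β := by
  ext <;> simp [Quaternion.re_mul, Quaternion.imI_mul, Quaternion.imJ_mul, Quaternion.imK_mul] <;>
    grind [Real.sin_sq_add_cos_sq]

lemma hasDerivAt_sph_azimuth : HasDerivAt (fun x => sph x β) (sphA α β) α := by
  have h : (fun x => sph x β) = fun x =>
      (Real.cos x * Real.sin β) • qI + (Real.sin x * Real.sin β) • qJ + Real.cos β • qK := by
    funext x; ext <;> simp <;> simp [qI, qJ, qK]
  rw [h]
  exact (((((Real.hasDerivAt_cos α).mul_const _).smul_const qI).add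
    (((Real.hasDerivAt_sin α).mul_const _).smul_const qJ)).add_const _).congr_deriv
    (by ext <;> simp [sphA] <;> simp [qI, qJ])

lemma hasDerivAt_sph_polar : HasDerivAt (fun x => sph α x) (sphB α β) β := by
  have h : (fun x => sph α x) = fun x =>
      (Real.cos α * Real.sin x) • qI + (Real.sin α * Real.sin x) • qJ + Real.cos x • qK := by
    funext x; ext <;> simp <;> simp [qI, qJ, qK]
  rw [h]
  exact ((((Real.hasDerivAt_sin β).const_mul _).smul_const qI).add
    (((Real.hasDerivAt_sin β).const_mul _).smul_const qJ)).add
    ((Real.hasDerivAt_cos β).smul_const qK) |>.congr_deriv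
    (by ext <;> simp [sphB] <;> simp [qI, qJ, qK])

lemma iota_coe_add_smul_sph (t : ℝ) {r : ℝ} (hr : 0 < r) :
    iota ((t : ℍ[ℝ]) + r • sph α β) = sph α β := by
  have him : ((t : ℍ[ℝ]) + r • sph α β).im = r • sph α β := by ext <;> simp
  rw [iota, him, norm_smul, norm_sph, mul_one, Real.norm_of_nonneg hr.le, smul_smul,
    inv_mul_cancel₀ hr.ne', one_smul]

end SphericalFrame

lemma hasDerivAt_coe_add (t : ℝ) (q : ℍ[ℝ]) : HasDerivAt (fun x : ℝ => (x : ℍ[ℝ]) + q) 1 t := by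
  simpa [← Quaternion.algebraMap_def, Algebra.algebraMap_eq_smul_one] using
    ((hasDerivAt_id t).smul_const (1 : ℍ[ℝ])).add_const q

lemma exists_hasDerivAt_comp_of_eq_add_mul_iota {ω : Set ℍ[ℝ]} {f : ℍ[ℝ] → ℍ[ℝ]}
    {u v : ℍ[ℝ] → ℝ} (hω : IsOpen ω) (hf : ContDiffOn ℝ 1 f ω)
    (hfuv : ∀ p ∈ ω, f p = (u p : ℍ[ℝ]) + (v p : ℍ[ℝ]) * iota p)
    {γ e : ℝ → ℍ[ℝ]} {d e' : ℍ[ℝ]} {s : ℝ} (hγ : HasDerivAt γ d s) (he : HasDerivAt e e' s)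
    (he_norm : ∀ x, ‖e x‖ = 1) (he_re : ∀ x, ⟪1, e x⟫_ℝ = 0) (hγs : γ s ∈ ω)
    (hιγ : ∀ᶠ x in 𝓝 s, iota (γ x) = e x) :
    ∃ a' b', HasDerivAt (fun x => u (γ x)) a' s ∧ HasDerivAt (fun x => v (γ x)) b' s ∧
      fderiv ℝ f (γ s) d = a' • 1 + b' • e s + v (γ s) • e' := by
  have hfγ : HasDerivAt (fun x => f (γ x)) (fderiv ℝ f (γ s) d) s :=
    ((hf.contDiffAt (hω.mem_nhds hγs)).differentiableAt one_ne_zero).hasFDerivAt.comp_hasDerivAt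
      s hγ
  refine hfγ.exists_hasDerivAt_coeffs he norm_one he_norm he_re ?_
  filter_upwards [hγ.continuousAt.preimage_mem_nhds (hω.mem_nhds hγs), hιγ] with x hx hιx
  rw [hfuv _ hx, hιx, Quaternion.coe_mul_eq_smul, ← Algebra.algebraMap_eq_smul_one]
  rfl

lemma sphericalCR_of_fueter_eq {L : ℍ[ℝ] →L[ℝ] ℍ[ℝ]} {α β r v w a b c d Uα Vα Uβ Vβ : ℝ}
    (h1 : L 1 = a • 1 + b • sph α β) (hι : L (sph α β) = c • 1 + d • sph α β)
    (hα : L (r • sphA α β) = Uα • 1 + Vα • sph α β + v • sphA α β)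
    (hβ : L (r • sphB α β) = Uβ • 1 + Vβ • sph α β + v • sphB α β)
    (hF : L 1 + sph α β * L (sph α β) + sphB α β * L (sphB α β)
      + sphAUnit α * L (sphAUnit α) = (w : ℍ[ℝ])) :
    Vα + Real.sin β * Uβ = 0 ∧ Uα - Real.sin β * Vβ = 0 := by
  have hJ : r • L (sphB α β) = Uβ • 1 + Vβ • sph α β + v • sphB α β := by rw [← map_smul, hβ]
  have hK : (r * Real.sin β) • L (sphAUnit α)
      = Uα • 1 + Vα • sph α β + (v * Real.sin β) • sphAUnit α := by
    rw [mul_smul, ← map_smul, ← map_smul, ← sphA_eq_sin_smul, hα, sphA_eq_sin_smul, smul_smul]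
  have key : (r * Real.sin β) • (w • 1 : ℍ[ℝ])
      = (r * Real.sin β) • (a • 1 + b • sph α β)
        + (r * Real.sin β) • (sph α β * (c • 1 + d • sph α β))
        + Real.sin β • (sphB α β * (Uβ • 1 + Vβ • sph α β + v • sphB α β))
        + sphAUnit α * (Uα • 1 + Vα • sph α β + (v * Real.sin β) • sphAUnit α) := by
    rw [← Algebra.algebraMap_eq_smul_one, Quaternion.algebraMap_def, ← hF, ← h1, ← hι, ← hJ, ← hK]
    simp only [mul_smul_comm]
    module
  simp only [mul_add, mul_smul_comm, mul_one, sph_mul_self, sphB_mul_sph, sphB_mul_self,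
    sphAUnit_mul_sph, sphAUnit_mul_self] at key
  have hcoeffs := Fintype.linearIndependent_iff.mp
    (orthonormal_one_sph_sphB_sphAUnit α β).linearIndependent
    ![r * Real.sin β * (a - d - w) - 2 * v * Real.sin β, r * Real.sin β * (b + c),
      Vα + Real.sin β * Uβ, Uα - Real.sin β * Vβ]
    (by
      simp only [Fin.sum_univ_four, Fin.isValue, Matrix.cons_val_zero, Matrix.cons_val_one,
        Matrix.cons_val]
      linear_combination (norm := module) -key)
  exact ⟨hcoeffs 2, hcoeffs 3⟩

theorem stmt9_general (ω : Set ℍ[ℝ]) (hω : IsOpen ω)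
    (f : ℍ[ℝ] → ℍ[ℝ]) (u v : ℍ[ℝ] → ℝ) (hf : IsClassIIWith f u v ω)
    (t r α β : ℝ) (hp : (t : ℍ[ℝ]) + r • sph α β ∈ ω) (hr : 0 < r)
    (hβ : Real.sin β ≠ 0) :
    (Real.sin β)⁻¹ * deriv (fun s : ℝ => v ((t : ℍ[ℝ]) + r • sph s β)) α
        + deriv (fun s : ℝ => u ((t : ℍ[ℝ]) + r • sph α s)) β = 0 ∧
    (Real.sin β)⁻¹ * deriv (fun s : ℝ => u ((t : ℍ[ℝ]) + r • sph s β)) α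
        - deriv (fun s : ℝ => v ((t : ℍ[ℝ]) + r • sph α s)) β = 0 := by
  obtain ⟨hC, hfuv, hF⟩ := hf
  have hcurve := @exists_hasDerivAt_comp_of_eq_add_mul_iota ω f u v hω hC hfuv
  obtain ⟨a, b, -, -, h1⟩ := hcurve (hasDerivAt_coe_add t _) (hasDerivAt_const t (sph α β))
    (fun _ => norm_sph α β) (fun _ => inner_one_sph α β) hp
    (.of_forall fun x => iota_coe_add_smul_sph α β x hr)
  obtain ⟨c, d, -, -, hι⟩ := hcurve (((hasDerivAt_id r).smul_const (sph α β)).const_add _)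
    (hasDerivAt_const r (sph α β)) (fun _ => norm_sph α β) (fun _ => inner_one_sph α β) hp
    ((eventually_gt_nhds hr).mono fun x hx => iota_coe_add_smul_sph α β t hx)
  obtain ⟨Uα, Vα, hUα, hVα, hα⟩ := hcurve (γ := fun x => (t : ℍ[ℝ]) + r • sph x β)
    (((hasDerivAt_sph_azimuth α β).const_smul r).const_add _) (hasDerivAt_sph_azimuth α β)
    (fun x => norm_sph x β) (fun x => inner_one_sph x β) hp
    (.of_forall fun x => iota_coe_add_smul_sph x β t hr)
  obtain ⟨Uβ, Vβ, hUβ, hVβ, hβ'⟩ := hcurve (γ := fun x => (t : ℍ[ℝ]) + r • sph α x)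
    (((hasDerivAt_sph_polar α β).const_smul r).const_add _) (hasDerivAt_sph_polar α β)
    (fun x => norm_sph α x) (fun x => inner_one_sph α x) hp
    (.of_forall fun x => iota_coe_add_smul_sph α x t hr)
  simp only [id, one_smul, smul_zero, add_zero] at h1 hι
  obtain ⟨hV, hU⟩ := sphericalCR_of_fueter_eq h1 hι hα hβ'
    ((fueterL_eq_of_orthonormal f _ _ _ _ (orthonormal_one_sph_sphB_sphAUnit α β)).symm.trans
      (hF _ hp))
  rw [hVα.deriv, hUβ.deriv, hUα.deriv, hVβ.deriv]
  constructor <;> field_simp <;> linarith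

/-- spherical Cauchy-Riemann equations for Class II functions. -/
theorem stmt9 (ω : Set ℍ[ℝ]) (hω : IsOpen ω) (hIm : ∀ p ∈ ω, p.im ≠ 0)
    (f : ℍ[ℝ] → ℍ[ℝ]) (u v : ℍ[ℝ] → ℝ) (hf : IsClassIIWith f u v ω)
    (t r α β : ℝ) (hp : (t : ℍ[ℝ]) + r • sph α β ∈ ω) (hr : 0 < r)
    (hβ : Real.sin β ≠ 0) :
    (Real.sin β)⁻¹ * deriv (fun s : ℝ => v ((t : ℍ[ℝ]) + r • sph s β)) α
        + deriv (fun s : ℝ => u ((t : ℍ[ℝ]) + r • sph α s)) β = 0 ∧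
    (Real.sin β)⁻¹ * deriv (fun s : ℝ => u ((t : ℍ[ℝ]) + r • sph s β)) α
        - deriv (fun s : ℝ => v ((t : ℍ[ℝ]) + r • sph α s)) β = 0 :=
  stmt9_general ω hω f u v hf t r α β hp hr hβ
end
end

section
/- On the open set ω = {p = t + xi + yj + zk ∈ ℍ : x > 0}, the function f(p) = (x/r(p))·ι(p) (i.e. u = 0 and v = x/r) is of Class I but is not of Class II. -/
open Quaternion

noncomputable section

/-!
Since `ι(p) = Im p / r`, the function is `f(p) = (x / r²) • Im p`. It depends on `p` only through
`Im p` and is homogeneous of degree `0` there, so it is constant along the lines through `p` in the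
directions `1` and `Im p`; both directional derivatives in the Class I equation vanish, and `f`
commutes with `p` because `Im p` does. At `q = i + j`, however, a direct computation gives
`∂f/∂_l p̄ (q) = -1 + k/2`, which is not real, whereas Class II would force it to equal the real
number `-2 v(q) / r(q)`.
-/

open Filter Topology
open scoped RealInnerProductSpace

theorem fderiv_apply_eq_zero_of_eventually_eq {𝕜 E F : Type*} [NontriviallyNormedField 𝕜]
    [NormedAddCommGroup E] [NormedSpace 𝕜 E] [NormedAddCommGroup F] [NormedSpace 𝕜 F]
    {f : E → F} {x v : E} (hf : DifferentiableAt 𝕜 f x)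
    (h : ∀ᶠ t in 𝓝 (0 : 𝕜), f (x + t • v) = f x) : fderiv 𝕜 f x v = 0 := by
  rw [← hf.lineDeriv_eq_fderiv, lineDeriv, EventuallyEq.deriv_eq h, deriv_const]

namespace Quaternion

theorem commute_im_self (p : ℍ[ℝ]) : Commute p.im p := by
  conv_rhs => rw [← re_add_im p]
  exact (coe_commute p.re p.im).symm.add_right (Commute.refl _)

def imₗ : ℍ[ℝ] →ₗ[ℝ] ℍ[ℝ] where
  toFun := im
  map_add' := im_add
  map_smul' c p := im_smul p c

def imCLM : ℍ[ℝ] →L[ℝ] ℍ[ℝ] := LinearMap.toContinuousLinearMap imₗ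

def imICLM : ℍ[ℝ] →L[ℝ] ℝ := LinearMap.toContinuousLinearMap (QuaternionAlgebra.imIₗ _ _ _)

@[simp] theorem imCLM_apply (p : ℍ[ℝ]) : imCLM p = p.im := rfl

@[simp] theorem imICLM_apply (p : ℍ[ℝ]) : imICLM p = p.imI := rfl

end Quaternion

open Quaternion

theorem not_isClassII_of_imK_fueterL_ne_zero {f : ℍ[ℝ] → ℍ[ℝ]} {ω : Set ℍ[ℝ]} {q : ℍ[ℝ]}
    (hq : q ∈ ω) (hf : (fueterL f q).imK ≠ 0) : ¬ IsClassII f ω := by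
  rintro ⟨u, v, -, -, hfueter⟩
  exact hf (by rw [hfueter q hq, imK_coe])

def xOverRIota (p : ℍ[ℝ]) : ℍ[ℝ] := (p.imI / ‖p.im‖ ^ 2) • p.im

theorem xOverRIota_eq :
    (fun p : ℍ[ℝ] => ((p.imI / ‖p.im‖ : ℝ) : ℍ[ℝ]) * iota p) = xOverRIota := by
  funext p
  rw [iota, coe_mul_eq_smul, smul_smul, xOverRIota]
  ring_nf

theorem xOverRIota_congr_im {p q : ℍ[ℝ]} (h : p.im = q.im) : xOverRIota p = xOverRIota q := by
  rw [xOverRIota, xOverRIota, ← imI_im, h, imI_im]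

theorem xOverRIota_smul {c : ℝ} (hc : c ≠ 0) (p : ℍ[ℝ]) : xOverRIota (c • p) = xOverRIota p := by
  rw [xOverRIota, xOverRIota, im_smul, smul_smul, imI_smul, norm_smul, mul_pow, Real.norm_eq_abs,
    sq_abs, smul_eq_mul]
  congr 1
  rw [div_mul_eq_mul_div, mul_right_comm, ← sq, mul_div_mul_left _ _ (pow_ne_zero 2 hc)]

theorem xOverRIota_mul_comm (p : ℍ[ℝ]) : xOverRIota p * p = p * xOverRIota p := by
  rw [xOverRIota, smul_mul_assoc, mul_smul_comm, (commute_im_self p).eq]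

theorem contDiffAt_xOverRIota {n : WithTop ℕ∞} {p : ℍ[ℝ]} (hp : p.im ≠ 0) :
    ContDiffAt ℝ n xOverRIota p :=
  (imICLM.contDiff.contDiffAt.div ((contDiff_norm_sq ℝ).comp imCLM.contDiff).contDiffAt
    (by simpa using hp)).smul imCLM.contDiff.contDiffAt

theorem differentiableAt_xOverRIota {p : ℍ[ℝ]} (hp : p.im ≠ 0) :
    DifferentiableAt ℝ xOverRIota p :=
  (contDiffAt_xOverRIota (n := 1) hp).differentiableAt one_ne_zero

theorem fderiv_xOverRIota_apply_one {p : ℍ[ℝ]} (hp : p.im ≠ 0) :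
    fderiv ℝ xOverRIota p 1 = 0 :=
  fderiv_apply_eq_zero_of_eventually_eq (differentiableAt_xOverRIota hp)
    (.of_forall fun _ => xOverRIota_congr_im (by simp))

theorem fderiv_xOverRIota_apply_im {p : ℍ[ℝ]} (hp : p.im ≠ 0) :
    fderiv ℝ xOverRIota p p.im = 0 := by
  refine fderiv_apply_eq_zero_of_eventually_eq (differentiableAt_xOverRIota hp) ?_
  have hne : ∀ᶠ t in 𝓝 (0 : ℝ), 1 + t ≠ 0 :=
    (continuous_const.add continuous_id).continuousAt.eventually_ne (by norm_num)
  filter_upwards [hne] with t ht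
  rw [← xOverRIota_smul ht p]
  exact xOverRIota_congr_im (by simp [add_smul])

theorem isClassI_xOverRIota {ω : Set ℍ[ℝ]} (hω : ∀ p ∈ ω, p.im ≠ 0) :
    IsClassI xOverRIota ω := by
  refine ⟨fun p hp => (contDiffAt_xOverRIota (hω p hp)).contDiffWithinAt,
    fun p _ => xOverRIota_mul_comm p, fun p hp => ?_⟩
  rw [iota, map_smul, fderiv_xOverRIota_apply_one (hω p hp), fderiv_xOverRIota_apply_im (hω p hp),
    smul_zero, mul_zero, add_zero]

theorem fderiv_xOverRIota_apply {p : ℍ[ℝ]} (hp : p.im ≠ 0) (w : ℍ[ℝ]) :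
    fderiv ℝ xOverRIota p w = (p.imI / ‖p.im‖ ^ 2) • w.im +
      ((w.imI * ‖p.im‖ ^ 2 - p.imI * (2 * ⟪p.im, w.im⟫)) / (‖p.im‖ ^ 2) ^ 2) • p.im := by
  have hr : ‖p.im‖ ^ 2 ≠ 0 := by simpa using hp
  have h := (imICLM.hasFDerivAt.mul ((hasFDerivAt_inv hr).comp p imCLM.hasFDerivAt.norm_sq)).smul
    imCLM.hasFDerivAt
  rw [(h.congr_of_eventuallyEq (.of_eq (funext fun q => by simp [xOverRIota, div_eq_mul_inv]))).fderiv]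
  simp only [imCLM_apply, Pi.mul_apply, imICLM_apply, Function.comp_apply,
    ContinuousLinearMap.comp_smul, add_apply, smul_apply, ContinuousLinearMap.smulRight_apply,
    ContinuousLinearMap.comp_apply, coe_innerSL_apply, ContinuousLinearMap.toSpanSingleton_apply,
    smul_eq_mul, mul_neg, smul_neg, nsmul_eq_mul, Nat.cast_ofNat]
  congr 2
  field_simp
  ring

theorem fueterL_xOverRIota_qI_add_qJ : fueterL xOverRIota (qI + qJ) = -1 + (2⁻¹ : ℝ) • qK := by
  have hn : ‖(qI + qJ).im‖ ^ 2 = 2 := by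
    rw [sq, ← normSq_eq_norm_mul_self, normSq_def']
    simp only [re_im, imI_im, imJ_im, imK_im, imI_add, imJ_add, imK_add]
    norm_num [qI, qJ]
  have him : (qI + qJ).im ≠ 0 := fun h => by simp [h] at hn
  simp only [fueterL, fderiv_xOverRIota_apply him, hn, inner_def]
  ext <;> simp [re_mul, imI_mul, imJ_mul, imK_mul] <;> norm_num [qI, qJ, qK]

/-- `f = (x/r) ι` is Class I but not Class II on `{x > 0}`. -/
theorem stmt10 :
    IsClassI (fun p : ℍ[ℝ] => ((p.imI / ‖p.im‖ : ℝ) : ℍ[ℝ]) * iota p)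
        {p : ℍ[ℝ] | 0 < p.imI} ∧
    ¬ IsClassII (fun p : ℍ[ℝ] => ((p.imI / ‖p.im‖ : ℝ) : ℍ[ℝ]) * iota p)
        {p : ℍ[ℝ] | 0 < p.imI} := by
  rw [xOverRIota_eq]
  have hq : 0 < (qI + qJ).imI := by
    rw [imI_add]
    norm_num [qI, qJ]
  refine ⟨isClassI_xOverRIota fun p hp h => ?_, not_isClassII_of_imK_fueterL_ne_zero hq ?_⟩
  · exact hp.ne' (by simpa using congrArg QuaternionAlgebra.imI h)
  · rw [fueterL_xOverRIota_qI_add_qJ, imK_add, imK_smul, imK_neg, imK_one]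
    norm_num [qK]

end
end

section
/- On the open set ω = {p = t + xi + yj + zk ∈ ℍ : y > 0}, the function ρ(p) = arctan(x/y) + ι(p)·artanh(z/r(p)) is of Class II but is not of Class III. -/
open Quaternion

noncomputable section

/-- The inverse hyperbolic tangent (not yet in Mathlib). -/
def artanh (x : ℝ) : ℝ := (1 / 2) * Real.log ((1 + x) / (1 - x))

@[simp] lemma qI_re : qI.re = 0 := rfl
@[simp] lemma qI_imI : qI.imI = 1 := rfl
@[simp] lemma qI_imJ : qI.imJ = 0 := rfl
@[simp] lemma qI_imK : qI.imK = 0 := rfl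
@[simp] lemma qJ_re : qJ.re = 0 := rfl
@[simp] lemma qJ_imI : qJ.imI = 0 := rfl
@[simp] lemma qJ_imJ : qJ.imJ = 1 := rfl
@[simp] lemma qJ_imK : qJ.imK = 0 := rfl
@[simp] lemma qK_re : qK.re = 0 := rfl
@[simp] lemma qK_imI : qK.imI = 0 := rfl
@[simp] lemma qK_imJ : qK.imJ = 0 := rfl
@[simp] lemma qK_imK : qK.imK = 1 := rfl

def CX : ℍ[ℝ] →L[ℝ] ℝ := ⟨(QuaternionAlgebra.imIₗ (-1 : ℝ) 0 (-1)), Quaternion.continuous_imI⟩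
def CY : ℍ[ℝ] →L[ℝ] ℝ := ⟨(QuaternionAlgebra.imJₗ (-1 : ℝ) 0 (-1)), Quaternion.continuous_imJ⟩
def CZ : ℍ[ℝ] →L[ℝ] ℝ := ⟨(QuaternionAlgebra.imKₗ (-1 : ℝ) 0 (-1)), Quaternion.continuous_imK⟩
def Cim : ℍ[ℝ] →L[ℝ] ℍ[ℝ] :=
  ⟨{ toFun := fun q => q.im,
     map_add' := fun a b => by simp
     map_smul' := fun s a => by simp }, Quaternion.continuous_im⟩
def Cco : ℝ →L[ℝ] ℍ[ℝ] := ⟨Algebra.linearMap ℝ ℍ[ℝ], Quaternion.continuous_coe⟩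
@[simp] lemma CX_apply (q : ℍ[ℝ]) : CX q = q.imI := rfl
@[simp] lemma CY_apply (q : ℍ[ℝ]) : CY q = q.imJ := rfl
@[simp] lemma CZ_apply (q : ℍ[ℝ]) : CZ q = q.imK := rfl
@[simp] lemma Cim_apply (q : ℍ[ℝ]) : Cim q = q.im := rfl
@[simp] lemma Cco_apply (r : ℝ) : Cco r = (r : ℍ[ℝ]) := rfl

lemma norm_im_eq (q : ℍ[ℝ]) : ‖q.im‖ = Real.sqrt (q.imI^2 + q.imJ^2 + q.imK^2) := by
  rw [← Real.sqrt_mul_self (norm_nonneg q.im), ← Quaternion.normSq_eq_norm_mul_self,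
    Quaternion.normSq_def']
  simp

lemma hasFDerivAt_normim {p : ℍ[ℝ]} (hp : 0 < p.imJ) :
    HasFDerivAt (fun q : ℍ[ℝ] => ‖q.im‖)
      ((p.imI / ‖p.im‖) • CX + (p.imJ / ‖p.im‖) • CY + (p.imK / ‖p.im‖) • CZ) p := by
  have hq0 : (0:ℝ) < p.imI*p.imI + p.imJ*p.imJ + p.imK*p.imK := by nlinarith [mul_self_nonneg p.imI, mul_self_nonneg p.imK, mul_pos hp hp]
  have hQ : HasFDerivAt (fun q : ℍ[ℝ] => q.imI*q.imI + q.imJ*q.imJ + q.imK*q.imK)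
      ((p.imI • CX + p.imI • CX) + (p.imJ • CY + p.imJ • CY) + (p.imK • CZ + p.imK • CZ)) p :=
    ((CX.hasFDerivAt.mul CX.hasFDerivAt).add (CY.hasFDerivAt.mul CY.hasFDerivAt)).add
      (CZ.hasFDerivAt.mul CZ.hasFDerivAt)
  have hs := (Real.hasDerivAt_sqrt (ne_of_gt hq0)).comp_hasFDerivAt p hQ
  have hnorm : ‖p.im‖ = Real.sqrt (p.imI*p.imI + p.imJ*p.imJ + p.imK*p.imK) := by
    rw [norm_im_eq]; ring_nf
  have hrpos : (0:ℝ) < Real.sqrt (p.imI*p.imI + p.imJ*p.imJ + p.imK*p.imK) := Real.sqrt_pos.2 hq0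
  have heq : (fun q : ℍ[ℝ] => ‖q.im‖) = fun q => Real.sqrt (q.imI*q.imI + q.imJ*q.imJ + q.imK*q.imK) := by
    funext q; rw [norm_im_eq]; ring_nf
  rw [heq, hnorm]
  refine hs.congr_fderiv ?_
  ext d
  simp [smul_smul]
  ring

lemma myDiv {E : Type*} [NormedAddCommGroup E] [NormedSpace ℝ E] {c d : E → ℝ}
    {c' d' : E →L[ℝ] ℝ} {x : E} (hc : HasFDerivAt c c' x) (hd : HasFDerivAt d d' x)
    (hx : d x ≠ 0) :
    HasFDerivAt (fun y => c y / d y) ((1 / d x) • c' - (c x / d x ^ 2) • d') x := by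
  have hinv := (hasDerivAt_inv hx).comp_hasFDerivAt x hd
  have h2 := hc.mul hinv
  have hfun : (fun y => c y / d y) = fun y => c y * (d y)⁻¹ := by
    funext y; rw [div_eq_mul_inv]
  rw [hfun]
  refine h2.congr_fderiv ?_
  ext e
  simp only [ContinuousLinearMap.coe_sub', Pi.sub_apply, ContinuousLinearMap.coe_smul',
    Pi.smul_apply, smul_eq_mul, ContinuousLinearMap.add_apply, Function.comp_apply]
  field_simp
  ring

lemma hasDerivAt_artanh {a : ℝ} (h1 : -1 < a) (h2 : a < 1) :
    HasDerivAt artanh (1 / (1 - a^2)) a := by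
  have ha1 : (0:ℝ) < 1 + a := by linarith
  have ha2 : (0:ℝ) < 1 - a := by linarith
  have hg : HasDerivAt (fun x : ℝ => (1 + x) / (1 - x))
      ((1 * (1 - a) - (1 + a) * (-1)) / (1 - a)^2) a := by
    exact ((hasDerivAt_id a).const_add 1).div ((hasDerivAt_id a).neg.const_add 1)
      (by positivity)
  have hgne : (1 + a) / (1 - a) ≠ 0 := by positivity
  have := (hg.log hgne).const_mul (1/2 : ℝ)
  refine this.congr_deriv ?_
  have h12 : (1:ℝ) - a^2 = (1+a)*(1-a) := by ring
  rw [h12]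
  field_simp
  ring

lemma contDiffAt_artanh {a : ℝ} (h1 : -1 < a) (h2 : a < 1) :
    ContDiffAt ℝ 1 artanh a := by
  have ha1 : (0:ℝ) < 1 + a := by linarith
  have ha2 : (0:ℝ) < 1 - a := by linarith
  have hd : ContDiffAt ℝ 1 (fun x : ℝ => (1 + x) / (1 - x)) a := by
    apply ContDiffAt.div
    · exact contDiffAt_const.add contDiffAt_id
    · exact contDiffAt_const.sub contDiffAt_id
    · positivity
  have : ContDiffAt ℝ 1 (fun x : ℝ => (1/2 : ℝ) * Real.log ((1 + x) / (1 - x))) a :=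
    contDiffAt_const.mul (hd.log (by positivity))
  exact this

set_option maxHeartbeats 1000000 in
lemma keyII {p : ℍ[ℝ]} (hp : 0 < p.imJ) : ∃ L : ℍ[ℝ] →L[ℝ] ℍ[ℝ],
    HasFDerivAt (fun p : ℍ[ℝ] => ((Real.arctan (p.imI / p.imJ) : ℝ) : ℍ[ℝ])
          + ((artanh (p.imK / ‖p.im‖) : ℝ) : ℍ[ℝ]) * iota p) L p ∧
    L 1 + qI * L qI + qJ * L qJ + qK * L qK
      = ((-2 * artanh (p.imK / ‖p.im‖) / ‖p.im‖ : ℝ) : ℍ[ℝ]) := by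
  have hy : p.imJ ≠ 0 := ne_of_gt hp
  have hq0 : (0:ℝ) < p.imI^2 + p.imJ^2 + p.imK^2 := by positivity
  have hr2 : ‖p.im‖^2 = p.imI^2 + p.imJ^2 + p.imK^2 := by
    rw [norm_im_eq]; exact Real.sq_sqrt hq0.le
  have hrpos : (0:ℝ) < ‖p.im‖ := by
    rw [norm_im_eq]; exact Real.sqrt_pos.2 hq0
  have hrne : ‖p.im‖ ≠ 0 := ne_of_gt hrpos
  have hzlt : p.imK^2 < ‖p.im‖^2 := by rw [hr2]; nlinarith [sq_nonneg p.imI]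
  have hb2 : p.imK / ‖p.im‖ < 1 := by
    rw [div_lt_one hrpos]; nlinarith [abs_nonneg p.imK, le_abs_self p.imK]
  have hb1 : -1 < p.imK / ‖p.im‖ := by
    rw [lt_div_iff₀ hrpos]; nlinarith [neg_abs_le p.imK]
  -- first part
  have h1a : HasFDerivAt (fun q : ℍ[ℝ] => q.imI / q.imJ)
      ((1 / p.imJ) • CX - (p.imI / p.imJ ^ 2) • CY) p :=
    myDiv CX.hasFDerivAt CY.hasFDerivAt hy
  have h1b := (Real.hasDerivAt_arctan (p.imI / p.imJ)).comp_hasFDerivAt p h1a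
  have h1 := Cco.hasFDerivAt.comp p h1b
  -- second part
  have hR := hasFDerivAt_normim hp
  have hA : HasFDerivAt (fun q : ℍ[ℝ] => q.imK / ‖q.im‖)
      ((1 / ‖p.im‖) • CZ - (p.imK / ‖p.im‖ ^ 2) •
        ((p.imI / ‖p.im‖) • CX + (p.imJ / ‖p.im‖) • CY + (p.imK / ‖p.im‖) • CZ)) p :=
    myDiv CZ.hasFDerivAt hR hrne
  have hV := (hasDerivAt_artanh hb1 hb2).comp_hasFDerivAt p hA
  have hw := myDiv hV hR hrne
  have hsm := hw.smul Cim.hasFDerivAt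
  have hfun : (fun p : ℍ[ℝ] => ((Real.arctan (p.imI / p.imJ) : ℝ) : ℍ[ℝ])
          + ((artanh (p.imK / ‖p.im‖) : ℝ) : ℍ[ℝ]) * iota p)
      = fun q : ℍ[ℝ] => (Cco (Real.arctan (q.imI / q.imJ)))
          + (artanh (q.imK / ‖q.im‖) / ‖q.im‖) • Cim q := by
    funext q
    rw [Cco_apply, Cim_apply, iota, mul_smul_comm, Quaternion.coe_mul_eq_smul, smul_smul]
    congr 1
    rw [div_eq_mul_inv, mul_comm, div_eq_mul_inv]
  rw [hfun]
  refine ⟨_, h1.add hsm, ?_⟩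
  rw [Quaternion.ext_iff]
  simp only [ContinuousLinearMap.add_apply, ContinuousLinearMap.comp_apply,
    ContinuousLinearMap.smul_apply, ContinuousLinearMap.coe_smul', ContinuousLinearMap.coe_sub',
    Pi.smul_apply, Pi.sub_apply, ContinuousLinearMap.smulRight_apply, CX_apply, CY_apply,
    CZ_apply, Cim_apply, Cco_apply, smul_eq_mul, Function.comp_apply,
    Quaternion.re_add, Quaternion.imI_add, Quaternion.imJ_add, Quaternion.imK_add,
    Quaternion.re_mul, Quaternion.imI_mul, Quaternion.imJ_mul, Quaternion.imK_mul,
    Quaternion.re_smul, Quaternion.imI_smul, Quaternion.imJ_smul, Quaternion.imK_smul,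
    Quaternion.re_coe, Quaternion.imI_coe, Quaternion.imJ_coe, Quaternion.imK_coe,
    Quaternion.re_im, Quaternion.imI_im, Quaternion.imJ_im, Quaternion.imK_im,
    Quaternion.re_one, Quaternion.imI_one, Quaternion.imJ_one, Quaternion.imK_one,
    qI_re, qI_imI, qI_imJ, qI_imK, qJ_re, qJ_imI, qJ_imJ, qJ_imK,
    qK_re, qK_imI, qK_imJ, qK_imK]
  norm_num
  clear h1a h1b h1 hR hA hV hw hsm hfun
  set x := p.imI with hxd
  set y := p.imJ with hyd
  set z := p.imK with hzd
  set r := ‖p.im‖ with hrd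
  set V := artanh (z / r) with hVd
  have hDpos : (0:ℝ) < 1 - (z/r)^2 := by
    rw [sub_pos, div_pow]
    rw [div_lt_one (by positivity)]
    exact hzlt
  have hDD : (0:ℝ) < r^2 - z^2 := sub_pos.2 hzlt
  have hs2 : (0:ℝ) < x^2 + y^2 := by positivity
  refine ⟨?_, ?_, ?_, ?_⟩
  · field_simp [hDD.ne', hs2.ne']
    linear_combination (-(r*z) - (r^2 - z^2)*V) * hr2
  · field_simp [hDD.ne', hs2.ne']
    linear_combination (y*r^3) * hr2
  · field_simp [hDD.ne', hs2.ne']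
    linear_combination (-(x*r^3)) * hr2
  · field_simp [hDD.ne', hs2.ne']
    ring

def pA : ℍ[ℝ] := ⟨0,1,1,0⟩
def pB : ℍ[ℝ] := ⟨0,0,Real.sqrt 2,0⟩
@[simp] lemma pA_re : pA.re = 0 := rfl
@[simp] lemma pA_imI : pA.imI = 1 := rfl
@[simp] lemma pA_imJ : pA.imJ = 1 := rfl
@[simp] lemma pA_imK : pA.imK = 0 := rfl
@[simp] lemma pA_im : pA.im = pA := rfl
@[simp] lemma pB_re : pB.re = 0 := rfl
@[simp] lemma pB_imI : pB.imI = 0 := rfl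
@[simp] lemma pB_imJ : pB.imJ = Real.sqrt 2 := rfl
@[simp] lemma pB_imK : pB.imK = 0 := rfl
@[simp] lemma pB_im : pB.im = pB := rfl

lemma keyCD {p : ℍ[ℝ]} (hp : 0 < p.imJ) :
    ContDiffAt ℝ 1 (fun p : ℍ[ℝ] => ((Real.arctan (p.imI / p.imJ) : ℝ) : ℍ[ℝ])
          + ((artanh (p.imK / ‖p.im‖) : ℝ) : ℍ[ℝ]) * iota p) p := by
  have hy : p.imJ ≠ 0 := ne_of_gt hp
  have hq0 : (0:ℝ) < p.imI^2 + p.imJ^2 + p.imK^2 := by positivity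
  have hrpos : (0:ℝ) < ‖p.im‖ := by rw [norm_im_eq]; exact Real.sqrt_pos.2 hq0
  have hrne : ‖p.im‖ ≠ 0 := ne_of_gt hrpos
  have hr2 : ‖p.im‖^2 = p.imI^2 + p.imJ^2 + p.imK^2 := by
    rw [norm_im_eq]; exact Real.sq_sqrt hq0.le
  have hzlt : p.imK^2 < ‖p.im‖^2 := by rw [hr2]; nlinarith [sq_nonneg p.imI]
  have hb2 : p.imK / ‖p.im‖ < 1 := by
    rw [div_lt_one hrpos]; nlinarith [abs_nonneg p.imK, le_abs_self p.imK]
  have hb1 : -1 < p.imK / ‖p.im‖ := by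
    rw [lt_div_iff₀ hrpos]; nlinarith [neg_abs_le p.imK]
  have hnim : ContDiffAt ℝ 1 (fun q : ℍ[ℝ] => ‖q.im‖) p := by
    have him : p.im ≠ 0 := by
      intro h
      have : p.imJ = 0 := by
        have := congrArg QuaternionAlgebra.imJ h
        simpa using this
      exact hy this
    exact (Cim.contDiff.contDiffAt (x := p)).norm ℝ him
  have hdiv : ContDiffAt ℝ 1 (fun q : ℍ[ℝ] => q.imI / q.imJ) p :=
    (CX.contDiff.contDiffAt).div (CY.contDiff.contDiffAt) hy
  have h1 : ContDiffAt ℝ 1 (fun q : ℍ[ℝ] => ((Real.arctan (q.imI / q.imJ) : ℝ) : ℍ[ℝ])) p :=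
    Cco.contDiff.contDiffAt.comp p (Real.contDiff_arctan.contDiffAt.comp p hdiv)
  have hA : ContDiffAt ℝ 1 (fun q : ℍ[ℝ] => q.imK / ‖q.im‖) p :=
    (CZ.contDiff.contDiffAt).div hnim hrne
  have hart : ContDiffAt ℝ 1 (fun q : ℍ[ℝ] => ((artanh (q.imK / ‖q.im‖) : ℝ) : ℍ[ℝ])) p :=
    Cco.contDiff.contDiffAt.comp p (ContDiffAt.comp (g := artanh) p (contDiffAt_artanh hb1 hb2) hA)
  have hiota : ContDiffAt ℝ 1 (fun q : ℍ[ℝ] => iota q) p := by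
    have : ContDiffAt ℝ 1 (fun q : ℍ[ℝ] => (‖q.im‖)⁻¹ • q.im) p :=
      (hnim.inv hrne).smul (Cim.contDiff.contDiffAt)
    exact this
  exact h1.add (hart.mul hiota)

/-- `ρ = arctan(x/y) + ι artanh(z/r)` is Class II but not
Class III on `{y > 0}`. -/
theorem stmt11 :
    IsClassII
        (fun p : ℍ[ℝ] => ((Real.arctan (p.imI / p.imJ) : ℝ) : ℍ[ℝ])
          + ((artanh (p.imK / ‖p.im‖) : ℝ) : ℍ[ℝ]) * iota p)
        {p : ℍ[ℝ] | 0 < p.imJ} ∧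
    ¬ IsClassIII
        (fun p : ℍ[ℝ] => ((Real.arctan (p.imI / p.imJ) : ℝ) : ℍ[ℝ])
          + ((artanh (p.imK / ‖p.im‖) : ℝ) : ℍ[ℝ]) * iota p)
        {p : ℍ[ℝ] | 0 < p.imJ} := by
  constructor
  · refine ⟨fun p => Real.arctan (p.imI / p.imJ), fun p => artanh (p.imK / ‖p.im‖),
      ?_, fun p _ => rfl, ?_⟩
    · intro p hp
      exact (keyCD hp).contDiffWithinAt
    · intro p hp
      obtain ⟨L, hL, hEq⟩ := keyII hp
      simp only [fueterL, hL.fderiv]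
      exact hEq
  · rintro ⟨-, ut, vt, hCI⟩
    have hm1 : pA ∈ {p : ℍ[ℝ] | 0 < p.imJ} := by
      show (0:ℝ) < pA.imJ
      rw [pA_imJ]; norm_num
    have hm2 : pB ∈ {p : ℍ[ℝ] | 0 < p.imJ} := by
      show (0:ℝ) < pB.imJ
      rw [pB_imJ]; exact Real.sqrt_pos.2 two_pos
    have e1 := congrArg QuaternionAlgebra.re (hCI _ hm1)
    have e2 := congrArg QuaternionAlgebra.re (hCI _ hm2)
    have hn1 : ‖pA.im‖ = Real.sqrt 2 := by
      rw [norm_im_eq, pA_imI, pA_imJ, pA_imK]; norm_num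
    have hn2 : ‖pB.im‖ = Real.sqrt 2 := by
      rw [norm_im_eq, pB_imI, pB_imJ, pB_imK]
      rw [Real.sq_sqrt (by norm_num : (2:ℝ) ≥ 0)]
      norm_num
    simp only [iota, hn1, hn2, pA_re, pA_imI, pA_imJ, pA_imK, pB_re, pB_imI, pB_imJ, pB_imK,
      pA_im, pB_im, Quaternion.re_add, Quaternion.re_mul, Quaternion.re_coe,
      Quaternion.imI_coe, Quaternion.imJ_coe, Quaternion.imK_coe, Quaternion.re_smul,
      Quaternion.imI_smul, Quaternion.imJ_smul, Quaternion.imK_smul,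
      smul_eq_mul] at e1 e2
    norm_num at e1 e2
    rw [← pA_im, hn1] at e1
    rw [← pB_im, hn2] at e2
    have hpi := Real.pi_pos
    rw [← e2] at e1
    linarith

end
end
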